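/- arXiv:1409.4784 — 6 statements merged into one kernel-verified Lean document; each statement's English description precedes it below -/
import Mathlib

section
/- Let k ≥ 2 and r ≥ 1 be integers, and let a₁, …, a_k be integers with gcd(a₁, …, a_k, r) = 1. Then there exists a k×k integer matrix M with det M = 1 such that Σ_{j=1}^{k} a_j M_{ij} ≡ 0 (mod r) for every i = 1, …, k−1, and Σ_{j=1}^{k} a_j M_{kj} ≡ 1 (mod r). -/
/-!
Acting by determinant-one integer matrices, Bézout's identity on two adjacent coordinates
clears one of them, so `a` can be carried to `c • e_k`. Since the matrix is invertible over `ℤ`,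
`c` divides every `a i`, hence is a unit modulo `r`; if `s * c ≡ 1 [ZMOD r]`, the block
`!![p, r; -q, s]` of determinant one on the last two coordinates then carries `c • e_k`
to `(0, …, 0, r * c, s * c) ≡ e_k`.
-/

open Matrix

namespace Matrix

variable {ι κ R : Type*} [Fintype ι] [DecidableEq ι] [Fintype κ] [DecidableEq κ] [CommRing R]

def SLReachable (u v : ι → R) : Prop :=
  ∃ M : Matrix ι ι R, M.det = 1 ∧ M *ᵥ u = v

namespace SLReachable

theorem refl (u : ι → R) : SLReachable u u :=
  ⟨1, det_one, one_mulVec u⟩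

theorem trans {u v w : ι → R} (huv : SLReachable u v) (hvw : SLReachable v w) :
    SLReachable u w := by
  obtain ⟨M, hM, rfl⟩ := huv
  obtain ⟨N, hN, rfl⟩ := hvw
  exact ⟨N * M, by rw [det_mul, hN, hM, one_mul], (mulVec_mulVec u N M).symm⟩

theorem sumElim {u u' : ι → R} {v v' : κ → R} (hu : SLReachable u u')
    (hv : SLReachable v v') : SLReachable (Sum.elim u v) (Sum.elim u' v') := by
  obtain ⟨A, hA, rfl⟩ := hu
  obtain ⟨B, hB, rfl⟩ := hv
  refine ⟨fromBlocks A 0 0 B, by rw [det_fromBlocks_zero₂₁, hA, hB, one_mul], ?_⟩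
  simp [fromBlocks_mulVec]

theorem comp_equiv {u v : ι → R} (h : SLReachable u v) (e : κ ≃ ι) :
    SLReachable (u ∘ e) (v ∘ e) := by
  obtain ⟨M, hM, rfl⟩ := h
  refine ⟨M.submatrix e e, by rw [det_submatrix_equiv_self, hM], ?_⟩
  rw [submatrix_mulVec_equiv, Function.comp_assoc, Equiv.self_comp_symm, Function.comp_id]

theorem append {m n : ℕ} {u u' : Fin m → R} {v v' : Fin n → R} (hu : SLReachable u u')
    (hv : SLReachable v v') : SLReachable (Fin.append u v) (Fin.append u' v') := by
  have sumElim_comp (x : Fin m → R) (y : Fin n → R) :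
      Sum.elim x y ∘ finSumFinEquiv.symm = Fin.append x y := by
    ext i
    refine Fin.addCases (fun i => ?_) (fun i => ?_) i <;> simp
  simpa only [sumElim_comp] using (hu.sumElim hv).comp_equiv finSumFinEquiv.symm

theorem dvd_of_eq_single {a : ι → R} {j : ι} {c : R} (h : SLReachable a (Pi.single j c))
    (i : ι) : c ∣ a i := by
  obtain ⟨M, hM, hMa⟩ := h
  have ha : a = M.adjugate *ᵥ Pi.single j c := by
    rw [← hMa, mulVec_mulVec, adjugate_mul, hM, one_smul, one_mulVec]
  rw [ha]
  simp

end SLReachable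

end Matrix

theorem Fin.append_zero_pair {α : Type*} [Zero α] (n : ℕ) (x y : α) :
    Fin.append (0 : Fin n → α) ![x, y] = Fin.snoc (Pi.single (Fin.last n) x) y := by
  ext i
  refine Fin.addCases (fun j => ?_) (fun j => ?_) i
  · simp [Fin.snoc, Fin.ext_iff, j.isLt.ne]
  · fin_cases j <;> simp [Fin.snoc, Pi.single_apply, Fin.ext_iff]

theorem Fin.append_zero_pair_zero {α : Type*} [Zero α] (n : ℕ) (y : α) :
    Fin.append (0 : Fin n → α) ![0, y] = Pi.single (Fin.last (n + 1)) y := by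
  ext i
  refine Fin.addCases (fun j => ?_) (fun j => ?_) i
  · simp [Fin.ext_iff, show (j : ℕ) ≠ n + 1 by omega]
  · fin_cases j <;> simp [Pi.single_apply, Fin.ext_iff]

theorem Int.exists_slReachable_pair (c d : ℤ) : ∃ g : ℤ, SLReachable ![c, d] ![0, g] := by
  obtain hcd | hcd := eq_or_ne (Int.gcd c d) 0
  · obtain ⟨rfl, rfl⟩ := Int.gcd_eq_zero_iff.mp hcd
    exact ⟨0, SLReachable.refl _⟩
  obtain ⟨g, c₀, d₀, -, hcop, rfl, rfl⟩ := Int.exists_gcd_one' (Nat.pos_of_ne_zero hcd)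
  obtain ⟨p, q, hpq⟩ := Int.isCoprime_iff_gcd_eq_one.mpr hcop
  refine ⟨g, !![d₀, -c₀; p, q], by simp [det_fin_two_of]; linear_combination hpq, ?_⟩
  ext i
  fin_cases i <;> simp
  · ring
  · linear_combination (g : ℤ) * hpq

theorem Int.exists_slReachable_single_last : ∀ {n : ℕ} (a : Fin (n + 1) → ℤ),
    ∃ c, SLReachable a (Pi.single (Fin.last n) c)
  | 0, a => ⟨a 0, by convert SLReachable.refl a; ext i; fin_cases i; simp⟩
  | n + 1, a => by
    obtain ⟨c, hc⟩ := exists_slReachable_single_last (Fin.init a)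
    obtain ⟨g, hg⟩ := exists_slReachable_pair c (a (Fin.last _))
    have h_init : SLReachable a (Fin.snoc (Pi.single (Fin.last n) c) (a (Fin.last _))) := by
      have := hc.append (SLReachable.refl ![a (Fin.last _)])
      rwa [Fin.append_right_eq_snoc, Fin.append_right_eq_snoc, Matrix.cons_val_zero,
        Fin.snoc_init_self] at this
    have h_pair := (SLReachable.refl (0 : Fin n → ℤ)).append hg
    rw [Fin.append_zero_pair, Fin.append_zero_pair_zero] at h_pair
    exact ⟨g, h_init.trans h_pair⟩

theorem Int.exists_slReachable_single_modEq {c r : ℤ} (hc : IsCoprime c r) (m : ℕ) :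
    ∃ v : Fin (m + 2) → ℤ, SLReachable (Pi.single (Fin.last (m + 1)) c) v ∧
      ∀ i, v i ≡ (Pi.single (Fin.last (m + 1)) 1 : Fin (m + 2) → ℤ) i [ZMOD r] := by
  obtain ⟨s, w, hsw⟩ := hc
  obtain ⟨p, q, hpq⟩ : IsCoprime s r := ⟨c, w, by linear_combination hsw⟩
  have h_pair : SLReachable ![0, c] ![r * c, s * c] :=
    ⟨!![p, r; -q, s], by simp [det_fin_two_of]; linear_combination hpq,
      by ext i; fin_cases i <;> simp [mul_comm]⟩
  refine ⟨_, by simpa only [Fin.append_zero_pair_zero] using (SLReachable.refl 0).append h_pair,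
    fun i => ?_⟩
  refine Fin.addCases (fun j => ?_) (fun j => ?_) i
  · simp [Fin.ext_iff, show (j : ℕ) ≠ m + 1 by omega]
  · fin_cases j
    · simpa [Fin.ext_iff] using Int.modEq_zero_iff_dvd.2 (dvd_mul_right r c)
    · simpa [Pi.single_apply, Fin.ext_iff] using
        Int.modEq_iff_dvd.2 ⟨w, by linear_combination -hsw⟩

/-- Let `k ≥ 2` and `r ≥ 1` be integers, and let `a₁, …, a_k` be integers with
`gcd(a₁, …, a_k, r) = 1`. Then there exists a `k×k` integer matrix `M` with `det M = 1`
such that `∑ j, a j * M i j ≡ 0 (mod r)` for every row `i < k-1`, and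
`∑ j, a j * M (k-1) j ≡ 1 (mod r)`. -/
theorem stmt_1 (k r : ℕ) (hk : 2 ≤ k) (a : Fin k → ℤ)
    (hgcd : Int.gcd (Finset.univ.gcd a) (r : ℤ) = 1) :
    ∃ M : Matrix (Fin k) (Fin k) ℤ, M.det = 1 ∧
      (∀ i : Fin k, (i : ℕ) < k - 1 → (∑ j, a j * M i j) ≡ 0 [ZMOD (r : ℤ)]) ∧
      (∑ j, a j * M ⟨k - 1, by omega⟩ j) ≡ 1 [ZMOD (r : ℤ)] := by
  obtain ⟨m, rfl⟩ : ∃ m, k = m + 2 := ⟨k - 2, by omega⟩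
  obtain ⟨c, hac⟩ := Int.exists_slReachable_single_last a
  have hcr : IsCoprime c r :=
    (Int.isCoprime_iff_gcd_eq_one.2 hgcd).of_isCoprime_of_dvd_left
      (Finset.dvd_gcd fun i _ => hac.dvd_of_eq_single i)
  obtain ⟨v, hcv, hv⟩ := Int.exists_slReachable_single_modEq hcr m
  obtain ⟨M, hM, hMa⟩ := hac.trans hcv
  have h_row (i) : ∑ j, a j * M i j = v i := (dotProduct_comm a (M i)).trans (congrFun hMa i)
  refine ⟨M, hM, fun i hi => ?_, ?_⟩
  · simpa [h_row, Pi.single_apply, Fin.ext_iff, show (i : ℕ) ≠ m + 1 by omega] using hv i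
  · simpa [h_row, Fin.last] using hv (Fin.last (m + 1))
end

section
/- Let r ≥ 2 and let n, m be positive integers. Let A and B be invertible r×r complex matrices with A^n = B^m, and suppose the pair (A, B) is irreducible. Then: (a) A and B are each diagonalizable; (b) there exists a nonzero complex number ϖ such that A^n = B^m = ϖ·Id; (c) neither A nor B is a scalar multiple of the identity matrix; and (d) if moreover det A = det B = 1, then ϖ^r = 1. -/
/-!
`A ^ n = B ^ m` commutes with both `A` and `B`, so each of its eigenspaces is a common invariant
subspace; by irreducibility it is everything, i.e. `A ^ n = B ^ m = ϖ • 1` (Schur's lemma), with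
`ϖ ≠ 0` because `A` is invertible, and `ϖ ^ r = det (A ^ n) = 1` in the unimodular case. Then `A`
and `B` are annihilated by the separable polynomials `X ^ n - ϖ` and `X ^ m - ϖ`, so they are
semisimple, hence diagonalizable over `ℂ`. Finally, if `A` were scalar, any eigenline of `B` would
be a common invariant subspace, which is impossible when `r ≥ 2`.
-/

open Module Module.End Matrix

namespace Module.End

variable {K V ι : Type*} [Field K] [AddCommGroup V] [Module K V]

theorem exists_basis_eigenvectors_of_iSup_eigenspace_eq_top {f : End K V}
    (hf : ⨆ μ, f.eigenspace μ = ⊤) (b₀ : Basis ι K V) :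
    ∃ (b : Basis ι K V) (d : ι → K), ∀ i, f (b i) = d i • b i := by
  have hspan : ⊤ ≤ Submodule.span K (⋃ μ, (f.eigenspace μ : Set V)) := by
    rw [← Submodule.iSup_eq_span, hf]
  let b := Basis.ofSpan hspan
  have hb : ∀ i, ∃ μ, f (b i) = μ • b i := fun i => by
    obtain ⟨μ, hμ⟩ := Set.mem_iUnion.mp (Basis.ofSpan_subset hspan ⟨i, rfl⟩)
    exact ⟨μ, mem_eigenspace_iff.mp hμ⟩
  choose d hd using hb
  let e := b.indexEquiv b₀
  exact ⟨b.reindex e, d ∘ e.symm, fun i => by simpa using hd (e.symm i)⟩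

theorem isSemisimple_of_pow_eq_algebraMap [FiniteDimensional K V] {f : End K V} {n : ℕ}
    (hn : (n : K) ≠ 0) {a : K} (ha : a ≠ 0) (h : f ^ n = algebraMap K (End K V) a) :
    f.IsSemisimple :=
  isSemisimple_of_squarefree_aeval_eq_zero (Polynomial.separable_X_pow_sub_C a hn ha).squarefree
    (by simp [h])

end Module.End

namespace Matrix

variable {ι R K : Type*} [Fintype ι]

theorem exists_isUnit_inv_mul_mul_eq_diagonal_of_basis [DecidableEq ι] [CommRing R]
    (A : Matrix ι ι R) (b : Basis ι R (ι → R)) (d : ι → R) (h : ∀ i, A *ᵥ b i = d i • b i) :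
    ∃ P : Matrix ι ι R, IsUnit P ∧ P⁻¹ * A * P = diagonal d := by
  let e := Pi.basisFun R ι
  have hdiag : LinearMap.toMatrix b b (toLin' A) = diagonal d := by
    rw [← LinearMap.toMatrix_toLin b b (diagonal d)]
    congr 1
    refine b.ext fun j => ?_
    simp [toLin_self, h, diagonal_apply, ite_smul]
  have hinv : (e.toMatrix b)⁻¹ = b.toMatrix e :=
    inv_eq_left_inv (b.toMatrix_mul_toMatrix_flip e)
  refine ⟨e.toMatrix b, ?_, ?_⟩
  · have := e.invertibleToMatrix b
    exact isUnit_of_invertible _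
  · rw [hinv, ← hdiag,
      ← basis_toMatrix_mul_linearMap_toMatrix_mul_basis_toMatrix (b' := e) (c' := e),
      LinearMap.toMatrix_eq_toMatrix', LinearMap.toMatrix'_toLin']

theorem exists_isUnit_inv_mul_mul_eq_diagonal_of_pow_eq_smul_one [DecidableEq ι] [Field K]
    [IsAlgClosed K] {A : Matrix ι ι K} {n : ℕ} (hn : (n : K) ≠ 0) {a : K} (ha : a ≠ 0)
    (h : A ^ n = a • 1) :
    ∃ P : Matrix ι ι K, ∃ d : ι → K, IsUnit P ∧ P⁻¹ * A * P = diagonal d := by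
  have hss : IsSemisimple (toLin' A) := isSemisimple_of_pow_eq_algebraMap hn ha (by
    rw [← toLin'_pow, h, map_smul, toLin'_one, Algebra.algebraMap_eq_smul_one]; rfl)
  obtain ⟨b, d, hb⟩ := exists_basis_eigenvectors_of_iSup_eigenspace_eq_top
    hss.iSup_eigenspace_eq_top (Pi.basisFun K ι)
  obtain ⟨P, hP⟩ := exists_isUnit_inv_mul_mul_eq_diagonal_of_basis A b d hb
  exact ⟨P, d, hP⟩

section IrreduciblePair

variable [Field K]

def IsIrreduciblePair (A B : Matrix ι ι K) : Prop :=
  ∀ V : Submodule K (ι → K), (∀ v ∈ V, A *ᵥ v ∈ V) → (∀ v ∈ V, B *ᵥ v ∈ V) → V = ⊥ ∨ V = ⊤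

variable {A B : Matrix ι ι K}

theorem IsIrreduciblePair.symm (h : IsIrreduciblePair A B) : IsIrreduciblePair B A :=
  fun V hB hA => h V hA hB

theorem mulVec_mem_eigenspace_of_commute [DecidableEq ι] {C : Matrix ι ι K} (hCA : Commute C A)
    {μ : K} {v : ι → K} (hv : v ∈ eigenspace (toLin' C) μ) :
    A *ᵥ v ∈ eigenspace (toLin' C) μ := by
  rw [mem_eigenspace_iff, toLin'_apply] at hv ⊢
  rw [mulVec_mulVec, hCA.eq, ← mulVec_mulVec, hv, mulVec_smul]

theorem IsIrreduciblePair.exists_eq_smul_one_of_commute [DecidableEq ι] [IsAlgClosed K]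
    [Nonempty ι] (h : IsIrreduciblePair A B) {C : Matrix ι ι K} (hCA : Commute C A)
    (hCB : Commute C B) : ∃ c : K, C = c • 1 := by
  obtain ⟨μ, hμ⟩ := exists_eigenvalue (toLin' C)
  have htop : eigenspace (toLin' C) μ = ⊤ :=
    (h _ (fun _ => mulVec_mem_eigenspace_of_commute hCA)
      (fun _ => mulVec_mem_eigenspace_of_commute hCB)).resolve_left hμ
  refine ⟨μ, toLin'.injective (LinearMap.ext fun v => ?_)⟩
  have hv : v ∈ eigenspace (toLin' C) μ := htop ▸ Submodule.mem_top
  simpa [smul_mulVec] using mem_eigenspace_iff.mp hv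

theorem IsIrreduciblePair.ne_smul_one [DecidableEq ι] [IsAlgClosed K] (h : IsIrreduciblePair A B)
    (hι : 1 < Fintype.card ι) (c : K) : A ≠ c • 1 := by
  rintro rfl
  have : Nonempty ι := Fintype.card_pos_iff.mp (by omega)
  obtain ⟨μ, hμ⟩ := exists_eigenvalue (toLin' B)
  obtain ⟨w, hw, hw0⟩ := hμ.exists_hasEigenvector
  have hBw : B *ᵥ w = μ • w := by simpa using mem_eigenspace_iff.mp hw
  have hline := h (K ∙ w) (fun v hv => by simpa [smul_mulVec] using Submodule.smul_mem _ c hv)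
    (fun v hv => by
      obtain ⟨a, rfl⟩ := Submodule.mem_span_singleton.mp hv
      rw [mulVec_smul, hBw, smul_smul]
      exact Submodule.smul_mem _ _ (Submodule.mem_span_singleton_self w))
  rcases hline with hbot | htop
  · exact hw0 ((Submodule.mem_bot K).mp (hbot ▸ Submodule.mem_span_singleton_self w))
  · have := finrank_span_singleton (K := K) hw0
    rw [htop, finrank_top, Module.finrank_fintype_fun_eq_card] at this
    omega

end IrreduciblePair

end Matrix

theorem stmt_2_general (r n m : ℕ) (hr : 2 ≤ r) (hn : 0 < n) (hm : 0 < m)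
    (A B : Matrix (Fin r) (Fin r) ℂ) (hA : IsUnit A)
    (hAB : A ^ n = B ^ m)
    (hirr : ∀ V : Submodule ℂ (Fin r → ℂ),
      (∀ v ∈ V, A.mulVec v ∈ V) → (∀ v ∈ V, B.mulVec v ∈ V) → V = ⊥ ∨ V = ⊤) :
    (∃ P : Matrix (Fin r) (Fin r) ℂ, ∃ d : Fin r → ℂ,
        IsUnit P ∧ P⁻¹ * A * P = Matrix.diagonal d) ∧
    (∃ Q : Matrix (Fin r) (Fin r) ℂ, ∃ e : Fin r → ℂ,
        IsUnit Q ∧ Q⁻¹ * B * Q = Matrix.diagonal e) ∧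
    (∀ c : ℂ, A ≠ c • (1 : Matrix (Fin r) (Fin r) ℂ)) ∧
    (∀ c : ℂ, B ≠ c • (1 : Matrix (Fin r) (Fin r) ℂ)) ∧
    ∃ ϖ : ℂ, ϖ ≠ 0 ∧ A ^ n = ϖ • (1 : Matrix (Fin r) (Fin r) ℂ) ∧
      B ^ m = ϖ • (1 : Matrix (Fin r) (Fin r) ℂ) ∧
      (A.det = 1 → B.det = 1 → ϖ ^ r = 1) := by
  have hirr : IsIrreduciblePair A B := hirr
  have hcard : 1 < Fintype.card (Fin r) := by rw [Fintype.card_fin]; omega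
  have : Nonempty (Fin r) := ⟨⟨0, by omega⟩⟩
  obtain ⟨ϖ, hAn⟩ := hirr.exists_eq_smul_one_of_commute (Commute.self_pow A n).symm
    (hAB ▸ (Commute.self_pow B m).symm)
  have hϖ : ϖ ≠ 0 := by
    rintro rfl
    simpa [hAn] using hA.pow n
  have hBm : B ^ m = ϖ • 1 := hAB ▸ hAn
  refine ⟨?_, ?_, hirr.ne_smul_one hcard, hirr.symm.ne_smul_one hcard, ϖ, hϖ, hAn, hBm,
    fun hdetA _ => ?_⟩
  · exact exists_isUnit_inv_mul_mul_eq_diagonal_of_pow_eq_smul_one (by exact_mod_cast hn.ne') hϖ hAn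
  · exact exists_isUnit_inv_mul_mul_eq_diagonal_of_pow_eq_smul_one (by exact_mod_cast hm.ne') hϖ hBm
  · simpa [hdetA, det_smul] using (congrArg det hAn).symm

/-- Let `r ≥ 2` and let `n, m` be positive integers. Let `A` and `B` be invertible `r×r`
complex matrices with `A^n = B^m`, and suppose the pair `(A, B)` is irreducible (the only
subspaces of `ℂ^r` invariant under both are `0` and `ℂ^r`). Then: (a) `A` and `B` are each
diagonalizable; (b) there is `ϖ ≠ 0` with `A^n = B^m = ϖ·Id`; (c) neither `A` nor `B` is a
scalar multiple of the identity; (d) if moreover `det A = det B = 1`, then `ϖ^r = 1`. -/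
theorem stmt_2 (r n m : ℕ) (hr : 2 ≤ r) (hn : 0 < n) (hm : 0 < m)
    (A B : Matrix (Fin r) (Fin r) ℂ) (hA : IsUnit A) (hB : IsUnit B)
    (hAB : A ^ n = B ^ m)
    (hirr : ∀ V : Submodule ℂ (Fin r → ℂ),
      (∀ v ∈ V, A.mulVec v ∈ V) → (∀ v ∈ V, B.mulVec v ∈ V) → V = ⊥ ∨ V = ⊤) :
    (∃ P : Matrix (Fin r) (Fin r) ℂ, ∃ d : Fin r → ℂ,
        IsUnit P ∧ P⁻¹ * A * P = Matrix.diagonal d) ∧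
    (∃ Q : Matrix (Fin r) (Fin r) ℂ, ∃ e : Fin r → ℂ,
        IsUnit Q ∧ Q⁻¹ * B * Q = Matrix.diagonal e) ∧
    (∀ c : ℂ, A ≠ c • (1 : Matrix (Fin r) (Fin r) ℂ)) ∧
    (∀ c : ℂ, B ≠ c • (1 : Matrix (Fin r) (Fin r) ℂ)) ∧
    ∃ ϖ : ℂ, ϖ ≠ 0 ∧ A ^ n = ϖ • (1 : Matrix (Fin r) (Fin r) ℂ) ∧
      B ^ m = ϖ • (1 : Matrix (Fin r) (Fin r) ℂ) ∧
      (A.det = 1 → B.det = 1 → ϖ ^ r = 1) :=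
  stmt_2_general r n m hr hn hm A B hA hAB hirr
end

section
/- Let m and n be coprime positive integers and let r be a positive integer. Let F be the set of pairs (S, T) of finite subsets of ℂ such that S and T each have exactly r elements, the product of all elements of S equals 1, the product of all elements of T equals 1, and s^n = t^m for all s ∈ S and t ∈ T. Then F is finite and r · |F| = C(n−1, r−1) · C(m−1, r−1), where C(a, b) denotes the binomial coefficient (equal to 0 when b > a). -/
/-!
For `(S, T)` with `s ^ n = t ^ m` on `S × T` and `#S = #T = r`, all these powers equal one value
`ϖ`, and `ϖ ^ r = (∏ S) ^ n`. Drop the product conditions and keep only `ϖ ^ r = 1`: these pairs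
number `r * C(n, r) * C(m, r)` (choose `ϖ`, then `r` of its `n`-th and `r` of its `m`-th roots),
and their products `(∏ S, ∏ T)` lie in `μ_n × μ_m`. Rescaling `(S, T) ↦ (c • S, d • T)` with
`c ^ n = d ^ m` preserves everything except the products, which get multiplied by `(c ^ r, d ^ r)`.
As `m` and `n` are coprime, every point of `μ_n × μ_m` is such a `(c ^ r, d ^ r)`, so all `n * m`
fibres have the size of `F`, the fibre over `(1, 1)`.
-/

open Finset Polynomial
open scoped Pointwise

theorem exists_pow_eq_and_pow_eq_of_coprime {G : Type*} [CommGroup G] {m n : ℕ}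
    (hmn : m.Coprime n) {a b : G} (ha : a ^ n = 1) (hb : b ^ m = 1) :
    ∃ z : G, z ^ m = a ∧ z ^ n = b := by
  have hbez : (m : ℤ) * m.gcdA n + n * m.gcdB n = 1 := by
    rw [← Nat.gcd_eq_gcd_ab, hmn.gcd_eq_one, Nat.cast_one]
  have bezout : ∀ x : G, (x ^ m) ^ m.gcdA n * (x ^ n) ^ m.gcdB n = x := fun x => by
    rw [← zpow_natCast, ← zpow_natCast, ← zpow_mul, ← zpow_mul, ← zpow_add, hbez, zpow_one]
  have pow_zpow_comm : ∀ (x : G) (k : ℤ) (l : ℕ), (x ^ k) ^ l = (x ^ l) ^ k := fun x k l => by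
    rw [← zpow_natCast, zpow_comm, zpow_natCast]
  refine ⟨a ^ m.gcdA n * b ^ m.gcdB n, ?_, ?_⟩
  · calc (a ^ m.gcdA n * b ^ m.gcdB n) ^ m = (a ^ m) ^ m.gcdA n * (a ^ n) ^ m.gcdB n := by
          rw [mul_pow, pow_zpow_comm, pow_zpow_comm, hb, ha]
      _ = a := bezout a
  · calc (a ^ m.gcdA n * b ^ m.gcdB n) ^ n = (b ^ m) ^ m.gcdA n * (b ^ n) ^ m.gcdB n := by
          rw [mul_pow, pow_zpow_comm, pow_zpow_comm, hb, ha]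
      _ = b := bezout b

section CommMonoid

variable (M : Type*) [CommMonoid M]

def torusPairs (m n r : ℕ) (a b : M) : Set (Finset M × Finset M) :=
  {p | p.1.card = r ∧ p.2.card = r ∧ p.1.prod id = a ∧ p.2.prod id = b ∧
    ∀ s ∈ p.1, ∀ t ∈ p.2, s ^ n = t ^ m}

variable {M}

theorem Finset.prod_id_pow_of_forall_pow_eq {S : Finset M} {n : ℕ} {w : M}
    (h : ∀ s ∈ S, s ^ n = w) : S.prod id ^ n = w ^ S.card := by
  rw [← prod_pow]
  exact (prod_congr rfl h).trans (prod_const w)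

theorem exists_common_pow_of_mem_torusPairs {m n r : ℕ} {a b : M} {p : Finset M × Finset M}
    (hp : p ∈ torusPairs M m n r a b) (hr : 0 < r) :
    ∃ w : M, w ^ r = a ^ n ∧ (∀ s ∈ p.1, s ^ n = w) ∧ ∀ t ∈ p.2, t ^ m = w := by
  obtain ⟨hS, hT, hSa, -, hST⟩ := hp
  obtain ⟨s₀, hs₀⟩ := card_pos.1 (hS ▸ hr)
  obtain ⟨t₀, ht₀⟩ := card_pos.1 (hT ▸ hr)
  have hSw : ∀ s ∈ p.1, s ^ n = t₀ ^ m := fun s hs => hST s hs t₀ ht₀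
  refine ⟨t₀ ^ m, ?_, hSw, fun t ht => ((hST s₀ hs₀ t ht).symm.trans (hSw s₀ hs₀))⟩
  rw [← hS, ← prod_id_pow_of_forall_pow_eq hSw, hSa]

variable [DecidableEq M]

theorem Finset.prod_id_units_smul (c : Mˣ) (S : Finset M) :
    (c • S).prod id = c ^ S.card • S.prod id := by
  rw [smul_finset_def, prod_image (fun x _ y _ h => MulAction.injective c h), smul_prod]
  rfl

theorem smul_mem_torusPairs_iff {m n r : ℕ} {c d : Mˣ} (hcd : c ^ n = d ^ m) {a b : M}
    {p : Finset M × Finset M} :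
    (c • p.1, d • p.2) ∈ torusPairs M m n r (c ^ r • a) (d ^ r • b) ↔
      p ∈ torusPairs M m n r a b := by
  simp only [torusPairs, Set.mem_ofPred_eq, card_smul_finset, prod_id_units_smul]
  refine and_congr_right fun hS => and_congr_right fun hT => ?_
  rw [hS, hT, smul_left_cancel_iff, smul_left_cancel_iff]
  refine and_congr_right' (and_congr_right' ?_)
  simp only [smul_finset_def, forall_mem_image, _root_.smul_pow, hcd, smul_left_cancel_iff]

theorem card_torusPairs_smul {m n r : ℕ} {c d : Mˣ} (hcd : c ^ n = d ^ m) (a b : M) :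
    Nat.card (torusPairs M m n r (c ^ r • a) (d ^ r • b)) =
      Nat.card (torusPairs M m n r a b) :=
  Nat.card_congr <| (((MulAction.toPerm c).prodCongr (MulAction.toPerm d)).subtypeEquiv
    fun _ => (smul_mem_torusPairs_iff hcd).symm).symm

end CommMonoid

section Field

variable {K : Type*} [Field K]

theorem card_nthRootsFinset_of_ne_zero [IsAlgClosed K] [CharZero K] (n : ℕ) {a : K}
    (ha : a ≠ 0) : #(nthRootsFinset n a) = n := by
  obtain rfl | hn := n.eq_zero_or_pos
  · simp
  have : NeZero (n : K) := ⟨Nat.cast_ne_zero.2 hn.ne'⟩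
  obtain ⟨ζ, hζ⟩ := HasEnoughRootsOfUnity.exists_primitiveRoot K n
  classical
  rw [nthRootsFinset_def, Multiset.toFinset_card_of_nodup (hζ.nthRoots_nodup ha),
    hζ.card_nthRoots, if_pos (IsAlgClosed.exists_pow_nat_eq a hn)]

theorem Units.exists_pow_eq_pow_and_pow_eq_of_coprime [IsAlgClosed K] {m n r : ℕ}
    (hmn : m.Coprime n) (hr : 0 < r) {a b : Kˣ} (ha : a ^ n = 1) (hb : b ^ m = 1) :
    ∃ c d : Kˣ, c ^ n = d ^ m ∧ c ^ r = a ∧ d ^ r = b := by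
  obtain ⟨z, hza, hzb⟩ := exists_pow_eq_and_pow_eq_of_coprime hmn ha hb
  obtain ⟨w, hw⟩ := IsAlgClosed.exists_pow_nat_eq (z : K) hr
  have hw0 : w ≠ 0 := by
    rintro rfl
    exact z.ne_zero (by rw [← hw, zero_pow hr.ne'])
  set u := Units.mk0 w hw0
  have hu : u ^ r = z := Units.ext (by simpa [u] using hw)
  refine ⟨u ^ m, u ^ n, by rw [← pow_mul, ← pow_mul, mul_comm], ?_, ?_⟩
  · rw [← pow_mul, mul_comm, pow_mul, hu, hza]
  · rw [← pow_mul, mul_comm, pow_mul, hu, hzb]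

variable [DecidableEq K]

theorem card_torusPairs_eq_of_pow_eq_one [IsAlgClosed K] {m n r : ℕ} (hmn : m.Coprime n)
    (hm : 0 < m) (hn : 0 < n) (hr : 0 < r) {a b : K} (ha : a ^ n = 1) (hb : b ^ m = 1) :
    Nat.card (torusPairs K m n r a b) = Nat.card (torusPairs K m n r 1 1) := by
  have ha' := IsUnit.of_pow_eq_one ha hn.ne'
  have hb' := IsUnit.of_pow_eq_one hb hm.ne'
  obtain ⟨c, d, hcd, hc, hd⟩ := Units.exists_pow_eq_pow_and_pow_eq_of_coprime hmn hr
    (a := ha'.unit⁻¹) (b := hb'.unit⁻¹) (Units.ext (by simp [ha])) (Units.ext (by simp [hb]))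
  rw [← card_torusPairs_smul hcd, hc, hd, Units.smul_def, Units.smul_def, smul_eq_mul,
    smul_eq_mul, ha'.val_inv_mul, hb'.val_inv_mul]

variable (K)

/-- Pairs of `r`-sets of `n`-th, resp. `m`-th, roots of a common `r`-th root of unity. -/
noncomputable def rootPairs (m n r : ℕ) : Finset (Finset K × Finset K) :=
  (nthRootsFinset r (1 : K)).biUnion fun w =>
    (nthRootsFinset n w).powersetCard r ×ˢ (nthRootsFinset m w).powersetCard r

variable {K}

theorem mem_rootPairs {m n r : ℕ} (hm : 0 < m) (hn : 0 < n) (hr : 0 < r)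
    {p : Finset K × Finset K} :
    p ∈ rootPairs K m n r ↔ p.1.card = r ∧ p.2.card = r ∧
      ∃ w : K, w ^ r = 1 ∧ (∀ s ∈ p.1, s ^ n = w) ∧ ∀ t ∈ p.2, t ^ m = w := by
  simp only [rootPairs, mem_biUnion, mem_product, mem_powersetCard, subset_iff,
    mem_nthRootsFinset hm, mem_nthRootsFinset hn, mem_nthRootsFinset hr]
  tauto

theorem card_rootPairs [IsAlgClosed K] [CharZero K] {m n r : ℕ} (hn : 0 < n) (hr : 0 < r) :
    #(rootPairs K m n r) = r * (n.choose r * m.choose r) := by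
  rw [rootPairs, card_biUnion]
  · rw [sum_congr rfl fun w hw => ?_, sum_const, smul_eq_mul,
      card_nthRootsFinset_of_ne_zero r one_ne_zero]
    have hw0 : w ≠ 0 := by
      rintro rfl
      simp [mem_nthRootsFinset hr, zero_pow hr.ne'] at hw
    rw [card_product, card_powersetCard, card_powersetCard, card_nthRootsFinset_of_ne_zero n hw0,
      card_nthRootsFinset_of_ne_zero m hw0]
  · intro w _ w' _ hww'
    refine disjoint_left.2 fun p hp hp' => hww' ?_
    simp only [mem_product, mem_powersetCard] at hp hp'
    obtain ⟨s, hs⟩ := card_pos.1 (hp.1.2 ▸ hr)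
    rw [← (mem_nthRootsFinset hn w).1 (hp.1.1 hs), (mem_nthRootsFinset hn w').1 (hp'.1.1 hs)]

theorem coe_filter_rootPairs {m n r : ℕ} (hm : 0 < m) (hn : 0 < n) (hr : 0 < r) {q : K × K}
    (hq : q.1 ^ n = 1) :
    ↑{p ∈ rootPairs K m n r | (p.1.prod id, p.2.prod id) = q} = torusPairs K m n r q.1 q.2 := by
  ext p
  simp only [coe_filter, Set.mem_ofPred_eq, mem_rootPairs hm hn hr, torusPairs, Prod.ext_iff]
  constructor
  · rintro ⟨⟨hS, hT, w, -, hSw, hTw⟩, hSq, hTq⟩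
    exact ⟨hS, hT, hSq, hTq, fun s hs t ht => (hSw s hs).trans (hTw t ht).symm⟩
  · intro hp
    obtain ⟨w, hw, hSw, hTw⟩ := exists_common_pow_of_mem_torusPairs hp hr
    exact ⟨⟨hp.1, hp.2.1, w, hw.trans hq, hSw, hTw⟩, hp.2.2.1, hp.2.2.2.1⟩

theorem card_rootPairs_eq_mul_card_torusPairs [IsAlgClosed K] [CharZero K] {m n r : ℕ}
    (hmn : m.Coprime n) (hm : 0 < m) (hn : 0 < n) (hr : 0 < r) :
    #(rootPairs K m n r) = n * m * Nat.card (torusPairs K m n r 1 1) := by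
  have maps : Set.MapsTo (fun p : Finset K × Finset K => (p.1.prod id, p.2.prod id))
      ↑(rootPairs K m n r) ↑(nthRootsFinset n (1 : K) ×ˢ nthRootsFinset m (1 : K)) := by
    intro p hp
    obtain ⟨hS, hT, w, hw, hSw, hTw⟩ := (mem_rootPairs hm hn hr).1 hp
    simp only [coe_product, Set.mem_prod, mem_coe, mem_nthRootsFinset hn,
      mem_nthRootsFinset hm, prod_id_pow_of_forall_pow_eq hSw, prod_id_pow_of_forall_pow_eq hTw,
      hS, hT, hw, and_self]
  rw [card_eq_sum_card_fiberwise maps, sum_congr rfl fun q hq => ?_, sum_const, card_product,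
    card_nthRootsFinset_of_ne_zero n one_ne_zero, card_nthRootsFinset_of_ne_zero m one_ne_zero,
    smul_eq_mul]
  rw [mem_product, mem_nthRootsFinset hn, mem_nthRootsFinset hm] at hq
  rw [← Set.ncard_coe_finset, ← Nat.card_coe_set_eq, coe_filter_rootPairs hm hn hr hq.1,
    card_torusPairs_eq_of_pow_eq_one hmn hm hn hr hq.1 hq.2]

end Field

theorem Nat.mul_choose_eq_mul_choose_sub_one {n k : ℕ} (hn : 0 < n) (hk : 0 < k) :
    k * n.choose k = n * (n - 1).choose (k - 1) := by
  obtain ⟨n, rfl⟩ := Nat.exists_eq_add_one_of_ne_zero hn.ne'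
  obtain ⟨k, rfl⟩ := Nat.exists_eq_add_one_of_ne_zero hk.ne'
  rw [Nat.add_sub_cancel, Nat.add_sub_cancel, Nat.add_one_mul_choose_eq, mul_comm]

/-- Let `m` and `n` be coprime positive integers and `r` a positive integer. Let `F` be the
set of pairs `(S, T)` of finite subsets of `ℂ` of cardinality `r`, each with product of
elements equal to `1`, such that `s^n = t^m` for all `s ∈ S`, `t ∈ T`. Then `F` is finite
and `r · |F| = C(n−1, r−1) · C(m−1, r−1)`. -/
theorem stmt_3 (m n r : ℕ) (hm : 0 < m) (hn : 0 < n) (hr : 0 < r) (hmn : Nat.Coprime m n) :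
    letI F : Set (Finset ℂ × Finset ℂ) :=
      {p | p.1.card = r ∧ p.2.card = r ∧ p.1.prod id = 1 ∧ p.2.prod id = 1 ∧
        ∀ s ∈ p.1, ∀ t ∈ p.2, s ^ n = t ^ m}
    F.Finite ∧ r * Nat.card F = Nat.choose (n - 1) (r - 1) * Nat.choose (m - 1) (r - 1) := by
  change (torusPairs ℂ m n r 1 1).Finite ∧ r * Nat.card (torusPairs ℂ m n r 1 1) = _
  refine ⟨?_, Nat.eq_of_mul_eq_mul_left (Nat.mul_pos hn hm) ?_⟩
  · rw [← coe_filter_rootPairs (q := (1, 1)) hm hn hr (one_pow n)]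
    exact finite_toSet _
  · calc n * m * (r * Nat.card (torusPairs ℂ m n r 1 1))
        = r * #(rootPairs ℂ m n r) := by
          rw [card_rootPairs_eq_mul_card_torusPairs hmn hm hn hr]; ring
      _ = (r * n.choose r) * (r * m.choose r) := by rw [card_rootPairs hn hr]; ring
      _ = n * m * ((n - 1).choose (r - 1) * (m - 1).choose (r - 1)) := by
          rw [Nat.mul_choose_eq_mul_choose_sub_one hn hr,
            Nat.mul_choose_eq_mul_choose_sub_one hm hr]; ring
end

section
/- Let n and r be positive integers. The set of pairs (k, ε), where k ∈ {0, 1, …, n−1} and ε is an injective function from {1, …, r} to ℂ satisfying ε(1)⋯ε(r) = 1 and ε(i)^n = exp(2πik/r) for every i, is finite of cardinality (n)_r, where (n)_r denotes the falling factorial n(n−1)⋯(n−r+1) (equal to 0 when r > n). -/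
open Complex

/-- Let `n` and `r` be positive integers. The set of pairs `(k, ε)` with `k ∈ {0,…,n−1}`
and `ε : {1,…,r} → ℂ` injective, `ε(1)⋯ε(r) = 1` and `ε(i)^n = exp(2πik/r)` for all `i`,
is finite of cardinality the falling factorial `(n)_r = n!/(n−r)!`. -/
theorem stmt_5 (n r : ℕ) (hn : 0 < n) (hr : 0 < r) :
    letI S : Set (ℕ × (Fin r → ℂ)) :=
      {p | p.1 < n ∧ Function.Injective p.2 ∧ (∏ i, p.2 i) = 1 ∧
        ∀ i, p.2 i ^ n = Complex.exp (2 * Real.pi * Complex.I * p.1 / r)}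
    S.Finite ∧ Nat.card S = n.descFactorial r := by
  set S : Set (ℕ × (Fin r → ℂ)) :=
    {p | p.1 < n ∧ Function.Injective p.2 ∧ (∏ i, p.2 i) = 1 ∧
      ∀ i, p.2 i ^ n = Complex.exp (2 * Real.pi * Complex.I * p.1 / r)} with hSdef
  haveI : NeZero n := ⟨hn.ne'⟩
  have hrn : r * n ≠ 0 := by positivity
  set ζ : ℂ := Complex.exp (2 * Real.pi * Complex.I / ((r * n : ℕ) : ℂ)) with hζdef
  have hζ : IsPrimitiveRoot ζ (r * n) := Complex.isPrimitiveRoot_exp (r * n) hrn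
  have hζ0 : ζ ≠ 0 := by
    intro h; exact Complex.exp_ne_zero _ (hζdef ▸ h)
  have hω : IsPrimitiveRoot (ζ ^ r) n := hζ.pow (Nat.pos_of_ne_zero hrn) rfl
  have hζrn : ζ ^ (r * n) = 1 := hζ.pow_eq_one
  -- ζ^(k*n) = exp(2πI k / r)
  have hkey : ∀ k : ℕ, ζ ^ (k * n) = Complex.exp (2 * Real.pi * Complex.I * k / r) := by
    intro k
    rw [hζdef, ← Complex.exp_nat_mul]
    congr 1
    have hr0 : (r : ℂ) ≠ 0 := Nat.cast_ne_zero.2 hr.ne'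
    have hn0 : (n : ℂ) ≠ 0 := Nat.cast_ne_zero.2 hn.ne'
    push_cast
    field_simp
  -- canonical k from a sum
  set k0 : (Fin r ↪ Fin n) → ℕ := fun f => (n - (∑ i, (f i : ℕ)) % n) % n with hk0def
  have hk0lt : ∀ f, k0 f < n := fun f => Nat.mod_lt _ hn
  have hk0dvd : ∀ f : Fin r ↪ Fin n, n ∣ k0 f + ∑ i, (f i : ℕ) := by
    intro f
    set s := ∑ i, (f i : ℕ)
    apply Nat.dvd_of_mod_eq_zero
    have hs : s % n < n := Nat.mod_lt _ hn
    rw [Nat.add_mod]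
    have h1 : (n - s % n) % n % n = (n - s % n) % n := Nat.mod_mod_of_dvd _ dvd_rfl
    rw [h1]
    rcases Nat.eq_zero_or_pos (s % n) with h0 | h0
    · simp [h0, Nat.mod_self]
    · rw [Nat.mod_eq_of_lt (by omega : n - s % n < n)]
      have h2 : n - s % n + s % n = n := by omega
      rw [h2, Nat.mod_self]
  set Φ : (Fin r ↪ Fin n) → ℕ × (Fin r → ℂ) :=
    fun f => (k0 f, fun i => ζ ^ (k0 f + (f i : ℕ) * r)) with hΦdef
  -- injectivity of Φ
  have hmul_inj : ∀ (a : ℕ) {x y : ℕ}, x < n → y < n →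
      ζ ^ (a + x * r) = ζ ^ (a + y * r) → x = y := by
    intro a x y hx hy h
    rw [pow_add, pow_add] at h
    have h2 : ζ ^ (x * r) = ζ ^ (y * r) := mul_left_cancel₀ (pow_ne_zero _ hζ0) h
    have := hζ.pow_inj (by calc x * r < n * r := (Nat.mul_lt_mul_right hr).mpr hx
                              _ = r * n := Nat.mul_comm n r)
      (by calc y * r < n * r := (Nat.mul_lt_mul_right hr).mpr hy
            _ = r * n := Nat.mul_comm n r) h2
    exact Nat.eq_of_mul_eq_mul_right hr this
  have hΦinj : Function.Injective Φ := by
    intro f g h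
    have h1 : k0 f = k0 g := congrArg Prod.fst h
    have h2 := congrArg Prod.snd h
    ext i
    have h3 : ζ ^ (k0 f + (f i : ℕ) * r) = ζ ^ (k0 f + (g i : ℕ) * r) := by
      have := congrFun h2 i
      simpa [hΦdef, h1] using this
    exact hmul_inj _ (f i).isLt (g i).isLt h3
  -- range Φ = S
  have hrange : Set.range Φ = S := by
    ext p
    constructor
    · rintro ⟨f, rfl⟩
      simp only [hΦdef, Set.mem_setOf_eq]
      refine ⟨hk0lt f, ?_, ?_, ?_⟩
      · intro i j hij
        exact f.injective (Fin.ext (hmul_inj _ (f i).isLt (f j).isLt hij))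
      · show (∏ i, ζ ^ (k0 f + (f i : ℕ) * r)) = 1
        rw [Finset.prod_pow_eq_pow_sum]
        obtain ⟨q, hq⟩ := hk0dvd f
        have hsum : ∑ i, (k0 f + (f i : ℕ) * r) = r * n * q := by
          rw [Finset.sum_add_distrib, Finset.sum_const, ← Finset.sum_mul]
          simp only [Finset.card_univ, Fintype.card_fin, smul_eq_mul]
          calc r * k0 f + (∑ i, (f i : ℕ)) * r = r * (k0 f + ∑ i, (f i : ℕ)) := by ring
            _ = r * (n * q) := by rw [hq]
            _ = r * n * q := by ring
        rw [hsum, pow_mul, hζrn, one_pow]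
      · intro i
        show (ζ ^ (k0 f + (f i : ℕ) * r)) ^ n =
          Complex.exp (2 * Real.pi * Complex.I * ((k0 f : ℕ) : ℂ) / r)
        rw [← pow_mul]
        have h5 : (k0 f + (f i : ℕ) * r) * n = k0 f * n + (r * n) * (f i : ℕ) := by ring
        rw [h5, pow_add, hkey, pow_mul, hζrn, one_pow, mul_one]
    · rintro ⟨hk, hinj, hprod, hpow⟩
      obtain ⟨k, ε⟩ := p
      simp only at hk hinj hprod hpow ⊢
      -- each ε i is ζ^k times an n-th root of unity
      have hεpow : ∀ i, (ε i / ζ ^ k) ^ n = 1 := by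
        intro i
        rw [div_pow, ← pow_mul, hkey k, hpow i, div_self (Complex.exp_ne_zero _)]
      have hex : ∀ i, ∃ m : ℕ, m < n ∧ ζ ^ (k + m * r) = ε i := by
        intro i
        obtain ⟨m, hm, hm2⟩ := hω.eq_pow_of_pow_eq_one (hεpow i)
        refine ⟨m, hm, ?_⟩
        rw [← pow_mul] at hm2
        have : ε i = ζ ^ k * ζ ^ (r * m) := by
          rw [hm2]; field_simp
        rw [this, ← pow_add]
        congr 1
        ring
      choose g hg1 hg2 using hex
      have hginj : ∀ i j, g i = g j → i = j := by
        intro i j hij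
        apply hinj
        rw [← hg2 i, ← hg2 j, hij]
      have hginj' : Function.Injective (fun i => (⟨g i, hg1 i⟩ : Fin n)) := by
        intro i j h
        exact hginj i j (congrArg Fin.val h)
      set f : Fin r ↪ Fin n := ⟨fun i => ⟨g i, hg1 i⟩, hginj'⟩ with hfdef
      have hfval : ∀ i, (f i : ℕ) = g i := fun i => rfl
      -- n ∣ k + ∑ g i
      have hdvd : n ∣ k + ∑ i, g i := by
        have h1 : ζ ^ (r * (k + ∑ i, g i)) = 1 := by
          have : (∏ i, ε i) = ζ ^ (r * (k + ∑ i, g i)) := by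
            have e0 : (∏ i, ε i) = ∏ i, ζ ^ (k + g i * r) :=
              Finset.prod_congr rfl (fun i _ => (hg2 i).symm)
            rw [e0, Finset.prod_pow_eq_pow_sum]
            congr 1
            rw [Finset.sum_add_distrib, Finset.sum_const, ← Finset.sum_mul]
            simp only [Finset.card_univ, Fintype.card_fin, smul_eq_mul]
            ring
          rw [← this, hprod]
        have h2 : r * n ∣ r * (k + ∑ i, g i) := (hζ.pow_eq_one_iff_dvd _).mp h1
        exact (mul_dvd_mul_iff_left hr.ne').mp h2
      have hkeq : k0 f = k := by
        have hfs : ∑ i, (f i : ℕ) = ∑ i, g i := Finset.sum_congr rfl (fun i _ => hfval i)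
        have hd1 : n ∣ k0 f + ∑ i, g i := hfs ▸ hk0dvd f
        have hmod : k0 f ≡ k [MOD n] := by
          have e1 : k0 f + ∑ i, g i ≡ 0 [MOD n] := Nat.modEq_zero_iff_dvd.mpr hd1
          have e2 : k + ∑ i, g i ≡ 0 [MOD n] := Nat.modEq_zero_iff_dvd.mpr hdvd
          exact Nat.ModEq.add_right_cancel' _ (e1.trans e2.symm)
        exact hmod.eq_of_lt_of_lt (hk0lt f) hk
      refine ⟨f, ?_⟩
      rw [hΦdef]
      refine Prod.ext hkeq (funext fun i => ?_)
      simp only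
      rw [hkeq, hfval]
      exact hg2 i
  refine ⟨?_, ?_⟩
  · rw [← hrange]; exact Set.finite_range Φ
  · rw [← hrange, Nat.card_range_of_injective hΦinj, Nat.card_eq_fintype_card,
      Fintype.card_embedding_eq, Fintype.card_fin, Fintype.card_fin]
end

section
/- Define f : ℂ × (ℂ∖{0}) → ℂ² by f(r, λ) = ((2r−1)λ, λ²). Then: (i) the image of the restriction of f to (ℂ∖{0,1}) × (ℂ∖{0}) is exactly {(u, v) ∈ ℂ² : v ≠ 0 and v ≠ u²}; (ii) for all (r, λ) and (r', λ') in ℂ × (ℂ∖{0}), f(r, λ) = f(r', λ') if and only if (r', λ') = (r, λ) or (r', λ') = (1−r, −λ). -/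
/-- Define `f(r, λ) = ((2r−1)λ, λ²)` on `ℂ × (ℂ∖{0})`. Then (i) the image of
`(ℂ∖{0,1}) × (ℂ∖{0})` under `f` is `{(u, v) : v ≠ 0 ∧ v ≠ u²}`, and (ii) two points of
`ℂ × (ℂ∖{0})` have the same image iff they agree or differ by `(r, λ) ↦ (1−r, −λ)`. -/
theorem stmt_9 :
    letI f : ℂ × ℂ → ℂ × ℂ := fun p => ((2 * p.1 - 1) * p.2, p.2 ^ 2)
    f '' {p : ℂ × ℂ | p.1 ≠ 0 ∧ p.1 ≠ 1 ∧ p.2 ≠ 0}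
        = {q : ℂ × ℂ | q.2 ≠ 0 ∧ q.2 ≠ q.1 ^ 2} ∧
    ∀ r l r' l' : ℂ, l ≠ 0 → l' ≠ 0 →
      (f (r, l) = f (r', l') ↔ (r' = r ∧ l' = l) ∨ (r' = 1 - r ∧ l' = -l)) := by
  refine ⟨?_, ?_⟩
  · ext ⟨u, v⟩
    simp only [Set.mem_image, Set.mem_setOf_eq, Prod.mk.injEq, Prod.exists]
    constructor
    · rintro ⟨r, l, ⟨hr0, hr1, hl⟩, h1, h2⟩
      refine ⟨h2 ▸ pow_ne_zero 2 hl, ?_⟩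
      intro h
      have key : 4 * (r * (r - 1)) * l ^ 2 = 0 := by
        have : v = ((2 * r - 1) * l) ^ 2 := by rw [h1, h]
        linear_combination -this - h2
      rcases mul_eq_zero.1 key with h' | h'
      · rcases mul_eq_zero.1 h' with h'' | h''
        · norm_num at h''
        · rcases mul_eq_zero.1 h'' with h3 | h3
          · exact hr0 h3
          · exact hr1 (by linear_combination h3)
      · exact hl (pow_eq_zero_iff (by norm_num) |>.1 h')
    · rintro ⟨hv, hvu⟩
      obtain ⟨l, hl⟩ : ∃ l : ℂ, l ^ 2 = v := IsAlgClosed.exists_pow_nat_eq v (n := 2) (by norm_num)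
      have hl0 : l ≠ 0 := by rintro rfl; simp at hl; exact hv hl.symm
      refine ⟨(u / l + 1) / 2, l, ⟨?_, ?_, hl0⟩, by field_simp; ring, hl⟩
      · intro h
        have : u = -l := by field_simp at h; linear_combination h
        exact hvu (by rw [this, ← hl]; ring)
      · intro h
        have : u = l := by field_simp at h; linear_combination h
        exact hvu (by rw [this, ← hl])
  · intro r l r' l' hl hl'
    constructor
    · intro h
      have h1 : (2 * r - 1) * l = (2 * r' - 1) * l' := congrArg Prod.fst h
      have h2 : l ^ 2 = l' ^ 2 := congrArg Prod.snd h
      have : (l' - l) * (l' + l) = 0 := by linear_combination -h2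
      rcases mul_eq_zero.1 this with h3 | h3
      · left
        have hll : l' = l := by linear_combination h3
        subst hll
        have := mul_right_cancel₀ hl h1
        exact ⟨by linear_combination -this / 2, rfl⟩
      · right
        have hll : l' = -l := by linear_combination h3
        subst hll
        refine ⟨?_, rfl⟩
        have : (2 * r - 1) * l = -((2 * r' - 1) * l) := by linear_combination h1
        have h4 : (2 * r - 1 + (2 * r' - 1)) * l = 0 := by linear_combination this
        rcases mul_eq_zero.1 h4 with h5 | h5
        · linear_combination h5 / 2
        · exact absurd h5 hl
    · rintro (⟨rfl, rfl⟩ | ⟨rfl, rfl⟩) <;> simp <;> ring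
end

section
/- For integers m, n ≥ 2, define the polynomial P(m,n) ∈ ℚ[x] by P(m,n)(x) = (1/12)(n−1)(n−2)(m−1)(m−2)(x⁴+4x³−3x²−15x+12) + x² + (1/4)(n−1)(m−1)(x²−3x+2) + (1/2)(n−1)(m−1)(n+m−4)(x²−3x+3). If m, n, m', n' ≥ 2 are integers, m and n are coprime and both odd, m' and n' are coprime and both odd, and P(m,n) = P(m',n') as polynomials, then {m, n} = {m', n'}. -/
open Polynomial

/-- The K-theory class of the `SL(3,ℂ)`-character variety of the `(m,n)` torus knot
(for `m, n` both odd), as a polynomial in the Lefschetz class. -/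
noncomputable def charVarPoly (m n : ℕ) : Polynomial ℚ :=
  C ((1 : ℚ) / 12 * ((n : ℚ) - 1) * ((n : ℚ) - 2) * ((m : ℚ) - 1) * ((m : ℚ) - 2)) *
      (X ^ 4 + 4 * X ^ 3 - 3 * X ^ 2 - 15 * X + 12)
    + X ^ 2
    + C ((1 : ℚ) / 4 * ((n : ℚ) - 1) * ((m : ℚ) - 1)) * (X ^ 2 - 3 * X + 2)
    + C ((1 : ℚ) / 2 * ((n : ℚ) - 1) * ((m : ℚ) - 1) * ((n : ℚ) + (m : ℚ) - 4)) *
      (X ^ 2 - 3 * X + 3)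

/-- If `m, n ≥ 2` are coprime and odd, `m', n' ≥ 2` are coprime and odd, and the
polynomials `P(m,n)` and `P(m',n')` coincide, then `{m, n} = {m', n'}`. -/
theorem stmt_12 (m n m' n' : ℕ) (hm : 2 ≤ m) (hn : 2 ≤ n) (hm' : 2 ≤ m') (hn' : 2 ≤ n')
    (hmn : Nat.Coprime m n) (hmn' : Nat.Coprime m' n')
    (hmo : Odd m) (hno : Odd n) (hmo' : Odd m') (hno' : Odd n')
    (h : charVarPoly m n = charVarPoly m' n') :
    (m = m' ∧ n = n') ∨ (m = n' ∧ n = m') := by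
  have h0 := congrArg (eval 0) h
  have h1 := congrArg (eval 1) h
  have h2 := congrArg (eval 2) h
  simp only [charVarPoly, eval_add, eval_mul, eval_pow, eval_C, eval_X, eval_sub, eval_ofNat,
    eval_one] at h0 h1 h2
  have hM : (2:ℚ) ≤ (m:ℚ) := by exact_mod_cast hm
  have hN : (2:ℚ) ≤ (n:ℚ) := by exact_mod_cast hn
  have ha : ((n:ℚ)-1)*((m:ℚ)-1) = ((n':ℚ)-1)*((m':ℚ)-1) := by
    linear_combination 2*h0 - (84/19)*h1 - (30/19)*h2
  have hb : ((n:ℚ)-1)*((m:ℚ)-1)*((n:ℚ)+(m:ℚ)-4)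
      = ((n':ℚ)-1)*((m':ℚ)-1)*((n':ℚ)+(m':ℚ)-4) := by
    linear_combination (36/19)*h1 + (2/19)*h2
  have haz : ((n:ℚ)-1)*((m:ℚ)-1) ≠ 0 := by nlinarith
  have hs : (n:ℚ)+(m:ℚ) = (n':ℚ)+(m':ℚ) := by
    rw [ha] at hb
    have := mul_left_cancel₀ (ha ▸ haz) hb
    linarith
  have hp : (m:ℚ)*(n:ℚ) = (m':ℚ)*(n':ℚ) := by linear_combination ha + hs
  have hq : ((m:ℚ)-(m':ℚ)) * ((m:ℚ)-(n':ℚ)) = 0 := by linear_combination (m:ℚ)*hs - hp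
  rcases mul_eq_zero.mp hq with h' | h'
  · left
    have hmm : m = m' := by exact_mod_cast sub_eq_zero.mp h'
    refine ⟨hmm, ?_⟩
    have : (n:ℚ) = (n':ℚ) := by subst hmm; linarith
    exact_mod_cast this
  · right
    have hmm : m = n' := by exact_mod_cast sub_eq_zero.mp h'
    refine ⟨hmm, ?_⟩
    have : (n:ℚ) = (m':ℚ) := by subst hmm; linarith
    exact_mod_cast this
end
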